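/- arXiv:1905.03125 — 4 statements merged into one kernel-verified Lean document; each statement's English description precedes it below -/
import Mathlib

section
/- Let h(z) = 2√z for z ≤ 1/2 and h(z) = 2√2 − 2√(1−z) for z ≥ 1/2, and g(z) = ∫₀^z dy/√(y(1−y)). Then for all z ∈ [0,1], h(z) ≤ g(z) ≤ √2·h(z). -/
/-! On `[0, 1/2]` the factor `1 - y` lies in `[1/2, 1]`, so the integrand `1/√(y(1-y))` is
squeezed between `1/√y` and `√2/√y`; on `[1/2, 1]` the same holds with `y` and `1 - y` swapped.
Integrating these comparison functions gives exactly `h`. -/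

open Real Set MeasureTheory intervalIntegral

lemma inv_sqrt_mul_mem_Icc {y t : ℝ} (hy : 0 ≤ y) (ht₁ : 1 / 2 ≤ t) (ht₂ : t ≤ 1) :
    (√(y * t))⁻¹ ∈ Icc (√y)⁻¹ (√2 * (√y)⁻¹) := by
  have hst : 0 < √t := sqrt_pos.2 (by linarith)
  have hst₁ : √t ≤ 1 := sqrt_le_one.2 ht₂
  have hst₂ : 1 ≤ √2 * √t := by
    rw [← sqrt_mul zero_le_two]
    exact one_le_sqrt.2 (by linarith)
  have hsy : 0 ≤ (√y)⁻¹ := by positivity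
  rw [sqrt_mul hy, mul_inv]
  constructor
  · exact le_mul_of_one_le_right hsy ((one_le_inv₀ hst).2 hst₁)
  · rw [mul_comm]
    exact mul_le_mul_of_nonneg_right ((inv_le_iff_one_le_mul₀ hst).2 hst₂) hsy

-- Also for `x < 0`: there `√x = 0`, and `x ^ r` carries the factor `cos (r * π) = 0`.
lemma inv_sqrt_eq_rpow (x : ℝ) : (√x)⁻¹ = x ^ (-(1 / 2) : ℝ) := by
  rcases le_or_gt 0 x with hx | hx
  · rw [rpow_neg hx, ← sqrt_eq_rpow]
  · rw [sqrt_eq_zero_of_nonpos hx.le, rpow_def_of_neg hx,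
      show -(1 / 2 : ℝ) * π = -(π / 2) by ring, cos_neg, cos_pi_div_two]
    simp

lemma intervalIntegrable_inv_sqrt (a b : ℝ) :
    IntervalIntegrable (fun x ↦ (√x)⁻¹) volume a b := by
  simpa only [inv_sqrt_eq_rpow] using intervalIntegrable_rpow' (by norm_num)

lemma intervalIntegrable_inv_sqrt_one_sub (a b : ℝ) :
    IntervalIntegrable (fun x ↦ (√(1 - x))⁻¹) volume a b := by
  simpa using (intervalIntegrable_inv_sqrt (1 - a) (1 - b)).comp_sub_left 1

lemma integral_inv_sqrt (a b : ℝ) :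
    ∫ x in a..b, (√x)⁻¹ = 2 * √b - 2 * √a := by
  simp only [inv_sqrt_eq_rpow]
  rw [integral_rpow (Or.inl (by norm_num)), show -(1 / 2 : ℝ) + 1 = 1 / 2 by norm_num,
    ← sqrt_eq_rpow, ← sqrt_eq_rpow]
  ring

lemma integral_inv_sqrt_one_sub (a b : ℝ) :
    ∫ x in a..b, (√(1 - x))⁻¹ = 2 * √(1 - a) - 2 * √(1 - b) := by
  rw [integral_comp_sub_left (fun x ↦ (√x)⁻¹) 1,
integral_inv_sqrt]

lemma integral_mem_Icc_of_mem_Icc {f k : ℝ → ℝ} {a b c : ℝ} (hab : a ≤ b)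
    (hf : AEStronglyMeasurable f) (hk : IntervalIntegrable k volume a b)
    (hk₀ : ∀ x ∈ Icc a b, 0 ≤ k x) (hfk : ∀ x ∈ Icc a b, f x ∈ Icc (k x) (c * k x)) :
    IntervalIntegrable f volume a b ∧
      ∫ x in a..b, f x ∈ Icc (∫ x in a..b, k x) (c * ∫ x in a..b, k x) := by
  have hfi : IntervalIntegrable f volume a b := by
    refine hk.const_mul c |>.mono_fun' hf.restrict ?_
    rw [uIoc_of_le hab]
    filter_upwards [ae_restrict_mem measurableSet_Ioc] with x hx
    have hx' : x ∈ Icc a b := Ioc_subset_Icc_self hx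
    rw [norm_of_nonneg ((hk₀ x hx').trans (hfk x hx').1)]
    exact (hfk x hx').2
  refine ⟨hfi, integral_mono_on hab hk hfi fun x hx ↦ (hfk x hx).1, ?_⟩
  rw [← intervalIntegral.integral_const_mul]
  exact integral_mono_on hab hfi (hk.const_mul c) fun x hx ↦ (hfk x hx).2

lemma two_mul_sqrt_half : 2 * √(1 / 2) = √2 := by
  rw [← sqrt_sq zero_le_two, ← sqrt_mul (sq_nonneg _)]
  norm_num

lemma measurable_inv_sqrt_mul_one_sub : Measurable fun y : ℝ ↦ (√(y * (1 - y)))⁻¹ := by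
  fun_prop

lemma integral_inv_sqrt_mul_one_sub_mem_Icc_of_le_half {z : ℝ} (hz₀ : 0 ≤ z) (hz : z ≤ 1 / 2) :
    IntervalIntegrable (fun y ↦ (√(y * (1 - y)))⁻¹) volume 0 z ∧
      ∫ y in 0..z, (√(y * (1 - y)))⁻¹ ∈ Icc (2 * √z) (√2 * (2 * √z)) := by
  have := integral_mem_Icc_of_mem_Icc hz₀ measurable_inv_sqrt_mul_one_sub.aestronglyMeasurable
    (intervalIntegrable_inv_sqrt 0 z) (fun _ _ ↦ by positivity)
    fun x hx ↦ inv_sqrt_mul_mem_Icc hx.1 (by linarith [hx.2]) (by linarith [hx.1])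
  rwa [integral_inv_sqrt, sqrt_zero, mul_zero, sub_zero] at this

lemma integral_inv_sqrt_mul_one_sub_mem_Icc_of_half_le {z : ℝ} (hz : 1 / 2 ≤ z) (hz₁ : z ≤ 1) :
    IntervalIntegrable (fun y ↦ (√(y * (1 - y)))⁻¹) volume (1 / 2) z ∧
      ∫ y in 1 / 2..z, (√(y * (1 - y)))⁻¹ ∈
        Icc (√2 - 2 * √(1 - z)) (√2 * (√2 - 2 * √(1 - z))) := by
  have := integral_mem_Icc_of_mem_Icc hz measurable_inv_sqrt_mul_one_sub.aestronglyMeasurable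
    (intervalIntegrable_inv_sqrt_one_sub (1 / 2) z) (fun _ _ ↦ by positivity)
    fun x hx ↦ mul_comm x (1 - x) ▸
      inv_sqrt_mul_mem_Icc (by linarith [hx.2]) hx.1 (by linarith [hx.2])
  rwa [integral_inv_sqrt_one_sub, show (1 : ℝ) - 1 / 2 = 1 / 2 by norm_num,
    two_mul_sqrt_half] at this

theorem h_le_g_le_sqrt_two_h (h : ℝ → ℝ)
    (hh₁ : ∀ z ∈ Icc (0 : ℝ) (1 / 2), h z = 2 * Real.sqrt z)
    (hh₂ : ∀ z ∈ Icc (1 / 2 : ℝ) 1, h z = 2 * Real.sqrt 2 - 2 * Real.sqrt (1 - z)) :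
    ∀ z ∈ Icc (0 : ℝ) 1,
      h z ≤ (∫ y in (0 : ℝ)..z, (Real.sqrt (y * (1 - y)))⁻¹) ∧
      (∫ y in (0 : ℝ)..z, (Real.sqrt (y * (1 - y)))⁻¹) ≤ Real.sqrt 2 * h z := by
  rintro z ⟨hz₀, hz₁⟩
  rcases le_total z (1 / 2) with hz | hz
  · rw [hh₁ z ⟨hz₀, hz⟩]
    exact (integral_inv_sqrt_mul_one_sub_mem_Icc_of_le_half hz₀ hz).2
  · obtain ⟨hleft, hI₁, hI₁'⟩ := integral_inv_sqrt_mul_one_sub_mem_Icc_of_le_half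
      (z := 1 / 2) (by norm_num) le_rfl
    obtain ⟨hright, hI₂, hI₂'⟩ := integral_inv_sqrt_mul_one_sub_mem_Icc_of_half_le hz hz₁
    rw [two_mul_sqrt_half] at hI₁ hI₁'
    rw [hh₂ z ⟨hz, hz₁⟩, ← integral_add_adjacent_intervals hleft hright]
    constructor <;> linarith
end

section
/- Let h(z) = 2√z for z ∈ [0,1/2] and h(z) = 2√2 − 2√(1−z) for z ∈ [1/2,1]. For any x ∈ (0,1/2], δ ≥ 0 with x + δ ∈ [1/2,1], and u ≥ 0 such that δ ≤ u·√(x(1−x)): h(x+δ) − h(x) ≤ 3u. -/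
open Real Set

set_option maxHeartbeats 1600000 in
theorem h_increment_crossing_half (h : ℝ → ℝ)
    (hh₁ : ∀ z ∈ Icc (0 : ℝ) (1 / 2), h z = 2 * Real.sqrt z)
    (hh₂ : ∀ z ∈ Icc (1 / 2 : ℝ) 1, h z = 2 * Real.sqrt 2 - 2 * Real.sqrt (1 - z))
    (x δ u : ℝ) (hx : x ∈ Ioc (0 : ℝ) (1 / 2)) (hδ : 0 ≤ δ)
    (hxδ : x + δ ∈ Icc (1 / 2 : ℝ) 1)
    (hu : 0 ≤ u) (hδu : δ ≤ u * Real.sqrt (x * (1 - x))) :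
    h (x + δ) - h x ≤ 3 * u := by
  obtain ⟨hx0, hx2⟩ := hx
  obtain ⟨hxd1, hxd2⟩ := hxδ
  rw [hh₁ x ⟨le_of_lt hx0, hx2⟩, hh₂ (x + δ) ⟨hxd1, hxd2⟩]
  set a := Real.sqrt x with ha
  set b := Real.sqrt (1 - (x + δ)) with hb
  set c := Real.sqrt (1 - x) with hc
  set s := Real.sqrt 2 with hs
  have ha0 : 0 < a := Real.sqrt_pos.mpr hx0
  have hb0 : 0 ≤ b := Real.sqrt_nonneg _
  have hc0 : 0 ≤ c := Real.sqrt_nonneg _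
  have hs0 : 0 < s := Real.sqrt_pos.mpr (by norm_num)
  have ha2 : a ^ 2 = x := Real.sq_sqrt hx0.le
  have hb2 : b ^ 2 = 1 - (x + δ) := Real.sq_sqrt (by linarith)
  have hc2 : c ^ 2 = 1 - x := Real.sq_sqrt (by linarith)
  have hs2 : s ^ 2 = 2 := Real.sq_sqrt (by norm_num)
  have hmul : Real.sqrt (x * (1 - x)) = a * c := Real.sqrt_mul hx0.le _
  rw [hmul] at hδu
  -- b ≤ 1/√2, i.e. s * b ≤ 1
  have hsb : s * b ≤ 1 := by nlinarith [sq_nonneg (s * b - 1), sq_nonneg (s*b)]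
  -- a ≤ 1/√2
  have hsa : s * a ≤ 1 := by nlinarith [sq_nonneg (s * a - 1)]
  -- c ≤ 1
  have hc1 : c ≤ 1 := by nlinarith [sq_nonneg (c - 1)]
  -- Claim 1: s - 2*b ≤ 2*s*δ
  have claim1 : s - 2 * b ≤ 2 * s * δ := by
    nlinarith [sq_nonneg (s - 2*b), mul_nonneg hb0 hs0.le, sq_nonneg b]
  -- Claim 2: s - 2*a ≤ δ / a, i.e. a*(s - 2*a) ≤ δ
  have claim2 : a * (s - 2 * a) ≤ δ := by
    nlinarith [sq_nonneg (s - 2*a), mul_nonneg ha0.le hs0.le]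
  have hs15 : s ≤ 3 / 2 := by nlinarith [sq_nonneg (s - 3/2)]
  -- δ ≤ u * a * c with a*c ≤ 1/2
  have hacsq : (a * c) ^ 2 = x * (1 - x) := by rw [mul_pow, ha2, hc2]
  have hac : a * c ≤ 1 / 2 := by
    nlinarith [mul_nonneg ha0.le hc0, sq_nonneg (x - 1/2)]
  have h1 : 2 * s * δ ≤ 3/2 * u := by
    have : δ ≤ u / 2 := by nlinarith [mul_le_mul_of_nonneg_left hac hu]
    nlinarith
  have h2 : s - 2 * a ≤ u * c := by
    refine le_of_mul_le_mul_left ?_ ha0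
    have : u * (a * c) = a * (u * c) := by ring
    linarith [claim2, hδu]
  have h2' : s - 2 * a ≤ u := le_trans h2 (by nlinarith)
  linarith
end

section
/- (Gini-smooth parameter sensitivity) Let f : [0,1]^L → ℝ be continuously differentiable on (0,1)^L and continuous on [0,1]^L, with 0 ≤ ∂f/∂x_i ≤ γ_∞ and √(∑_i x_i(1−x_i)(∂f/∂x_i)²) ≤ γ_g for all x ∈ (0,1)^L. Then for any x, ε ∈ [0,1]^L with ε_i ≤ min{u_i√(x_i(1−x_i)) + v_i, 1 − x_i} where u_i, v_i ≥ 0: f(x+ε) − f(x) ≤ 3√2 · γ_g · √(∑_i u_i²) + γ_∞ · ∑_i v_i. -/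
/-!
Along the segment `y t = x + t • ε` every coordinate satisfies
`y_i (1 - y_i) ≥ (1 - t) x_i (1 - x_i)`, so Cauchy–Schwarz and the Gini bound at `y t` give
`∑ ε_i ∂_i f (y t) ≤ γ_g ‖u‖ / √(1 - t) + γ_∞ ∑ v_i`. Integrating over `t ∈ [0, 1]` yields
`f (x + ε) - f x ≤ 2 γ_g ‖u‖ + γ_∞ ∑ v_i`, and `2 ≤ 3 √2`. When `x` or `x + ε` lies on the
boundary of the cube, both are first contracted towards its centre, which preserves the
hypotheses, and continuity of `f` passes to the limit.
-/

open Set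

lemma ContinuousLinearMap.apply_eq_sum_mul_single {ι : Type*} [Fintype ι] [DecidableEq ι]
    (φ : (ι → ℝ) →L[ℝ] ℝ) (e : ι → ℝ) : φ e = ∑ i, e i * φ (Pi.single i 1) := by
  conv_lhs => rw [pi_eq_sum_univ' e]
  simp [map_sum, map_smul]

lemma one_sub_mul_mul_one_sub_le {x e t : ℝ} (hx : 0 ≤ x) (he : 0 ≤ e) (hex : e ≤ 1 - x)
    (ht₀ : 0 ≤ t) (ht₁ : t ≤ 1) :
    (1 - t) * (x * (1 - x)) ≤ (x + t * e) * (1 - (x + t * e)) := by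
  have hy : (1 - t) * (1 - x) ≤ 1 - (x + t * e) := by nlinarith
  calc (1 - t) * (x * (1 - x)) = x * ((1 - t) * (1 - x)) := by ring
    _ ≤ (x + t * e) * (1 - (x + t * e)) :=
      mul_le_mul (by nlinarith) hy (by nlinarith) (by nlinarith)

lemma sqrt_sum_mul_sq_le_div_sqrt_one_sub {ι : Type*} [Fintype ι] {x ε d : ι → ℝ} {t γ : ℝ}
    (hx : ∀ i, 0 ≤ x i) (hε : ∀ i, 0 ≤ ε i) (hεx : ∀ i, ε i ≤ 1 - x i)
    (ht₀ : 0 ≤ t) (ht₁ : t < 1)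
    (hγ : √(∑ i, (x i + t * ε i) * (1 - (x i + t * ε i)) * d i ^ 2) ≤ γ) :
    √(∑ i, x i * (1 - x i) * d i ^ 2) ≤ γ / √(1 - t) := by
  rw [le_div_iff₀ (Real.sqrt_pos.2 (sub_pos.2 ht₁)), ← Real.sqrt_mul' _ (sub_nonneg.2 ht₁.le)]
  refine (Real.sqrt_le_sqrt ?_).trans hγ
  rw [Finset.sum_mul]
  refine Finset.sum_le_sum fun i _ => ?_
  linear_combination mul_le_mul_of_nonneg_right
    (one_sub_mul_mul_one_sub_le (hx i) (hε i) (hεx i) ht₀ ht₁.le) (sq_nonneg (d i))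

lemma sum_mul_le_of_sqrt_sum_mul_sq_le {ι : Type*} [Fintype ι] {x ε u v d : ι → ℝ}
    {t γinf γg : ℝ} (hx : ∀ i, 0 ≤ x i) (hε : ∀ i, 0 ≤ ε i) (hv : ∀ i, 0 ≤ v i)
    (hεle : ∀ i, ε i ≤ min (u i * √(x i * (1 - x i)) + v i) (1 - x i))
    (hd : ∀ i, 0 ≤ d i ∧ d i ≤ γinf) (ht₀ : 0 ≤ t) (ht₁ : t < 1)
    (hgini : √(∑ i, (x i + t * ε i) * (1 - (x i + t * ε i)) * d i ^ 2) ≤ γg) :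
    ∑ i, ε i * d i ≤ γg * √(∑ i, u i ^ 2) / √(1 - t) + γinf * ∑ i, v i := by
  have hεx : ∀ i, ε i ≤ 1 - x i := fun i => (le_min_iff.1 (hεle i)).2
  have hsq : ∀ i, (√(x i * (1 - x i)) * d i) ^ 2 = x i * (1 - x i) * d i ^ 2 := fun i => by
    rw [mul_pow, Real.sq_sqrt (mul_nonneg (hx i) (by linarith [hε i, hεx i]))]
  have hcs : ∑ i, u i * (√(x i * (1 - x i)) * d i) ≤
      √(∑ i, u i ^ 2) * √(∑ i, x i * (1 - x i) * d i ^ 2) := by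
    simpa only [hsq] using
      Real.sum_mul_le_sqrt_mul_sqrt Finset.univ u fun i => √(x i * (1 - x i)) * d i
  calc ∑ i, ε i * d i
      ≤ ∑ i, (u i * (√(x i * (1 - x i)) * d i) + v i * d i) := by
        gcongr with i
        nlinarith [(le_min_iff.1 (hεle i)).1, (hd i).1]
    _ = ∑ i, u i * (√(x i * (1 - x i)) * d i) + ∑ i, v i * d i := Finset.sum_add_distrib
    _ ≤ √(∑ i, u i ^ 2) * √(∑ i, x i * (1 - x i) * d i ^ 2) + ∑ i, v i * γinf :=
        add_le_add hcs (Finset.sum_le_sum fun i _ => mul_le_mul_of_nonneg_left (hd i).2 (hv i))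
    _ ≤ √(∑ i, u i ^ 2) * (γg / √(1 - t)) + γinf * ∑ i, v i := by
        rw [Finset.mul_sum]
        exact add_le_add (mul_le_mul_of_nonneg_left
            (sqrt_sum_mul_sq_le_div_sqrt_one_sub hx hε hεx ht₀ ht₁ hgini) (Real.sqrt_nonneg _))
          (Finset.sum_le_sum fun i _ => (mul_comm _ _).le)
    _ = γg * √(∑ i, u i ^ 2) / √(1 - t) + γinf * ∑ i, v i := by ring

lemma sub_le_of_hasDerivAt_le_div_sqrt_one_sub {g g' : ℝ → ℝ} {C V : ℝ}
    (hg : ContinuousOn g (Icc 0 1)) (hg' : ∀ t ∈ Ioo (0 : ℝ) 1, HasDerivAt g (g' t) t)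
    (hbound : ∀ t ∈ Ioo (0 : ℝ) 1, g' t ≤ C / √(1 - t) + V) :
    g 1 - g 0 ≤ 2 * C + V := by
  set φ : ℝ → ℝ := fun t => g t + 2 * C * √(1 - t) - V * t
  have hφ' : ∀ t ∈ Ioo (0 : ℝ) 1,
      HasDerivAt φ (g' t + 2 * C * (-1 / (2 * √(1 - t))) - V * 1) t := fun t ht =>
    ((hg' t ht).add ((((hasDerivAt_id t).const_sub 1).sqrt
      (sub_ne_zero.2 ht.2.ne')).const_mul _)).sub ((hasDerivAt_id t).const_mul V)
  have hanti : AntitoneOn φ (Icc 0 1) := by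
    refine antitoneOn_of_hasDerivWithinAt_nonpos (convex_Icc 0 1)
      (f' := fun t => g' t + 2 * C * (-1 / (2 * √(1 - t))) - V * 1) ?_ ?_ ?_
    · exact (hg.add (by fun_prop)).sub (by fun_prop)
    · rw [interior_Icc]
      exact fun t ht => (hφ' t ht).hasDerivWithinAt
    · rw [interior_Icc]
      intro t ht
      have hpos : 0 < √(1 - t) := Real.sqrt_pos.2 (sub_pos.2 ht.2)
      have : 2 * C * (-1 / (2 * √(1 - t))) = -(C / √(1 - t)) := by field_simp
      linarith [hbound t ht]
  have h01 := hanti (left_mem_Icc.2 zero_le_one) (right_mem_Icc.2 zero_le_one) zero_le_one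
  simp only [φ, sub_zero, sub_self, Real.sqrt_one, Real.sqrt_zero] at h01
  linarith

theorem gini_smooth_sub_le_of_mem_pi_Ioo {ι : Type*} [Fintype ι] [DecidableEq ι] {f : (ι → ℝ) → ℝ}
    {γinf γg : ℝ}
    (hdiff : ∀ y ∈ Set.pi univ fun _ => Ioo (0 : ℝ) 1, DifferentiableAt ℝ f y)
    (hgrad : ∀ y ∈ Set.pi univ fun _ => Ioo (0 : ℝ) 1, ∀ i,
        0 ≤ fderiv ℝ f y (Pi.single i 1) ∧ fderiv ℝ f y (Pi.single i 1) ≤ γinf)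
    (hgini : ∀ y ∈ Set.pi univ fun _ => Ioo (0 : ℝ) 1,
        √(∑ i, y i * (1 - y i) * (fderiv ℝ f y (Pi.single i 1)) ^ 2) ≤ γg)
    {x ε u v : ι → ℝ} (hx : x ∈ Set.pi univ fun _ => Ioo (0 : ℝ) 1)
    (hxε : x + ε ∈ Set.pi univ fun _ => Ioo (0 : ℝ) 1)
    (hε : ∀ i, 0 ≤ ε i) (hv : ∀ i, 0 ≤ v i)
    (hεle : ∀ i, ε i ≤ min (u i * √(x i * (1 - x i)) + v i) (1 - x i)) :
    f (x + ε) - f x ≤ 2 * (γg * √(∑ i, u i ^ 2)) + γinf * ∑ i, v i := by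
  have hseg : ∀ t ∈ Icc (0 : ℝ) 1, x + t • ε ∈ Set.pi univ fun _ => Ioo (0 : ℝ) 1 :=
    fun t ht => (convex_pi fun _ _ => convex_Ioo 0 1).add_smul_mem hx hxε ht
  have hpath : ∀ t ∈ Icc (0 : ℝ) 1,
      HasDerivAt (fun s : ℝ => f (x + s • ε)) (fderiv ℝ f (x + t • ε) ε) t := fun t ht =>
    (hdiff _ (hseg t ht)).hasFDerivAt.comp_hasDerivAt t
      (((hasDerivAt_id t).smul_const ε).const_add x |>.congr_deriv (one_smul ℝ ε))
  have h := sub_le_of_hasDerivAt_le_div_sqrt_one_sub (g := fun s : ℝ => f (x + s • ε))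
    (C := γg * √(∑ i, u i ^ 2)) (V := γinf * ∑ i, v i)
    (fun t ht => (hpath t ht).continuousAt.continuousWithinAt)
    (fun t ht => hpath t (Ioo_subset_Icc_self ht)) fun t ht => by
      have hy := hseg t (Ioo_subset_Icc_self ht)
      rw [ContinuousLinearMap.apply_eq_sum_mul_single]
      refine sum_mul_le_of_sqrt_sum_mul_sq_le (fun i => (hx i (mem_univ i)).1.le) hε hv hεle
        (hgrad _ hy) ht.1.le ht.2 ?_
      simpa only [Pi.add_apply, Pi.smul_apply, smul_eq_mul] using hgini _ hy
  simpa only [one_smul, zero_smul, add_zero] using h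

noncomputable def shrinkTowardsCentre {ι : Type*} (s : ℝ) (x : ι → ℝ) : ι → ℝ :=
  fun i => (1 - s) * x i + s / 2

@[simp]
lemma shrinkTowardsCentre_zero {ι : Type*} (x : ι → ℝ) : shrinkTowardsCentre 0 x = x := by
  ext
  simp [shrinkTowardsCentre]

lemma shrinkTowardsCentre_mem_pi_Ioo {ι : Type*} {s : ℝ} {x : ι → ℝ}
    (hx : x ∈ Set.pi univ fun _ => Icc (0 : ℝ) 1) (hs : s ∈ Ioo (0 : ℝ) 1) :
    shrinkTowardsCentre s x ∈ Set.pi univ fun _ => Ioo (0 : ℝ) 1 := fun i _ => by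
  have : x i ∈ Icc (0 : ℝ) 1 := hx i (mem_univ i)
  show (1 - s) * x i + s / 2 ∈ Ioo (0 : ℝ) 1
  constructor <;> nlinarith [this.1, this.2, hs.1, hs.2]

lemma shrinkTowardsCentre_add {ι : Type*} (s : ℝ) (x ε : ι → ℝ) :
    shrinkTowardsCentre s (x + ε) = shrinkTowardsCentre s x + (1 - s) • ε := by
  ext i
  simp only [shrinkTowardsCentre, Pi.add_apply, Pi.smul_apply, smul_eq_mul]
  ring

lemma one_sub_mul_le_min_of_le_min {x e u v s : ℝ} (hu : 0 ≤ u) (hv : 0 ≤ v)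
    (hs : s ∈ Icc (0 : ℝ) 1) (he : e ≤ min (u * √(x * (1 - x)) + v) (1 - x)) :
    (1 - s) * e ≤ min (u * √(((1 - s) * x + s / 2) * (1 - ((1 - s) * x + s / 2))) + v)
      (1 - ((1 - s) * x + s / 2)) := by
  have hs' : 0 ≤ 1 - s := sub_nonneg.2 hs.2
  have hvar : (1 - s) * √(x * (1 - x)) ≤
      √(((1 - s) * x + s / 2) * (1 - ((1 - s) * x + s / 2))) := by
    rw [← Real.sqrt_sq hs', ← Real.sqrt_mul (sq_nonneg _), Real.sqrt_sq hs']
    exact Real.sqrt_le_sqrt (by nlinarith [hs.1, hs.2])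
  obtain ⟨he₁, he₂⟩ := le_min_iff.1 he
  refine le_min ?_ ?_
  · nlinarith [mul_le_mul_of_nonneg_left hvar hu, mul_le_mul_of_nonneg_left he₁ hs', hs.1]
  · nlinarith [mul_le_mul_of_nonneg_left he₂ hs', hs.1]

lemma ContinuousOn.sub_le_of_forall_shrinkTowardsCentre {ι : Type*}
    {f : (ι → ℝ) → ℝ} (hf : ContinuousOn f (Set.pi univ fun _ => Icc (0 : ℝ) 1)) {x y : ι → ℝ}
    {B : ℝ} (hx : x ∈ Set.pi univ fun _ => Icc (0 : ℝ) 1)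
    (hy : y ∈ Set.pi univ fun _ => Icc (0 : ℝ) 1)
    (h : ∀ s ∈ Ioo (0 : ℝ) 1, f (shrinkTowardsCentre s y) - f (shrinkTowardsCentre s x) ≤ B) :
    f y - f x ≤ B := by
  have hcomp : ∀ z ∈ Set.pi univ (fun _ => Icc (0 : ℝ) 1),
      ContinuousWithinAt (fun s => f (shrinkTowardsCentre s z)) (Ioo 0 1) 0 := fun z hz => by
    refine (hf _ (by rwa [shrinkTowardsCentre_zero])).comp
      (Continuous.continuousWithinAt ?_) fun s hs =>
        pi_mono (fun _ _ => Ioo_subset_Icc_self) (shrinkTowardsCentre_mem_pi_Ioo hz hs)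
    unfold shrinkTowardsCentre
    fun_prop
  simpa using ContinuousWithinAt.closure_le
    (by simp [closure_Ioo zero_ne_one]) ((hcomp y hy).sub (hcomp x hx)) continuousWithinAt_const h

theorem gini_smooth_param_sensitivity (L : ℕ) (f : (Fin L → ℝ) → ℝ) (γinf γg : ℝ)
    (hcont : ContinuousOn f (Set.pi univ fun _ => Icc (0 : ℝ) 1))
    (hdiff : ∀ x ∈ Set.pi univ fun _ => Ioo (0 : ℝ) 1, DifferentiableAt ℝ f x)
    (hgrad : ∀ x ∈ Set.pi univ fun _ => Ioo (0 : ℝ) 1, ∀ i,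
        0 ≤ fderiv ℝ f x (Pi.single i 1) ∧ fderiv ℝ f x (Pi.single i 1) ≤ γinf)
    (hgini : ∀ x ∈ Set.pi univ fun _ => Ioo (0 : ℝ) 1,
        Real.sqrt (∑ i, x i * (1 - x i) * (fderiv ℝ f x (Pi.single i 1)) ^ 2) ≤ γg)
    (x ε u v : Fin L → ℝ)
    (hx : ∀ i, x i ∈ Icc (0 : ℝ) 1) (hε : ∀ i, ε i ∈ Icc (0 : ℝ) 1)
    (hu : ∀ i, 0 ≤ u i) (hv : ∀ i, 0 ≤ v i)
    (hεle : ∀ i, ε i ≤ min (u i * Real.sqrt (x i * (1 - x i)) + v i) (1 - x i)) :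
    f (x + ε) - f x ≤ 3 * Real.sqrt 2 * γg * Real.sqrt (∑ i, (u i) ^ 2) + γinf * ∑ i, v i := by
  have hγg : 0 ≤ γg := (Real.sqrt_nonneg _).trans (hgini (fun _ => 1 / 2) fun _ _ => by norm_num)
  have hxε : x + ε ∈ Set.pi univ fun _ => Icc (0 : ℝ) 1 := fun i _ =>
    ⟨add_nonneg (hx i).1 (hε i).1, show x i + ε i ≤ 1 by linarith [(le_min_iff.1 (hεle i)).2]⟩
  have hbound : f (x + ε) - f x ≤ 2 * (γg * √(∑ i, u i ^ 2)) + γinf * ∑ i, v i := by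
    refine hcont.sub_le_of_forall_shrinkTowardsCentre (fun i _ => hx i) hxε fun s hs => ?_
    have hxs := shrinkTowardsCentre_mem_pi_Ioo (fun i _ => hx i) hs
    have hxεs := shrinkTowardsCentre_mem_pi_Ioo hxε hs
    rw [shrinkTowardsCentre_add] at hxεs ⊢
    exact gini_smooth_sub_le_of_mem_pi_Ioo hdiff hgrad hgini hxs hxεs
      (fun i => mul_nonneg (sub_nonneg.2 hs.2.le) (hε i).1) hv
      fun i => one_sub_mul_le_min_of_le_min (hu i) (hv i) (Ioo_subset_Icc_self hs) (hεle i)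
  have h2 : 2 ≤ 3 * √2 := by linarith [Real.one_le_sqrt.2 one_le_two]
  nlinarith [mul_le_mul_of_nonneg_right h2 (mul_nonneg hγg (Real.sqrt_nonneg (∑ i, u i ^ 2)))]
end

section
/- (Gini smoothness of PMC reward) Let f(x) = 1 − ∏_{j∈A}(1 − x_j) for x ∈ [0,1]^L and A ⊆ {1,...,L}. Then f is monotonic, 0 ≤ ∂f/∂x_i ≤ 1 for i ∈ A, and ∑_{j∈A} x_j(1−x_j)·(∂f/∂x_j)² ≤ 1/e for all x ∈ (0,1)^L, i.e., the Gini-weighted smoothness constant is γ_g = 1/√e, independent of |A|. -/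
open Set

theorem pmc_gini_smoothness (L : ℕ) (A : Finset (Fin L)) :
    (MonotoneOn (fun x : Fin L → ℝ => 1 - ∏ j ∈ A, (1 - x j))
        (Set.pi univ fun _ => Icc (0 : ℝ) 1)) ∧
    (∀ x : Fin L → ℝ, (∀ j, x j ∈ Ioo (0 : ℝ) 1) → ∀ i ∈ A,
        0 ≤ ∏ j ∈ A.erase i, (1 - x j) ∧ ∏ j ∈ A.erase i, (1 - x j) ≤ 1) ∧
    (∀ x : Fin L → ℝ, (∀ j, x j ∈ Ioo (0 : ℝ) 1) →
        ∑ j ∈ A, x j * (1 - x j) * (∏ k ∈ A.erase j, (1 - x k)) ^ 2 ≤ 1 / Real.exp 1) := by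
  refine ⟨?_, ?_, ?_⟩
  · intro x hx y hy hxy
    simp only [Set.mem_pi, Set.mem_univ, forall_true_left, Set.mem_Icc] at hx hy
    have : ∏ j ∈ A, (1 - y j) ≤ ∏ j ∈ A, (1 - x j) := by
      apply Finset.prod_le_prod
      · intro i _; linarith [(hy i).2]
      · intro i _; linarith [hxy i]
    simpa only [] using sub_le_sub_left this 1
  · intro x hx i _
    constructor
    · exact Finset.prod_nonneg fun j _ => by linarith [(hx j).2]
    · exact Finset.prod_le_one (fun j _ => by linarith [(hx j).2])
        (fun j _ => by linarith [(hx j).1])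
  · intro x hx
    set P : ℝ := ∏ k ∈ A, (1 - x k) with hP
    set S : ℝ := ∑ j ∈ A, x j with hS
    have hPnn : 0 ≤ P := Finset.prod_nonneg fun j _ => by linarith [(hx j).2]
    have hSnn : 0 ≤ S := Finset.sum_nonneg fun j _ => (hx j).1.le
    have step1 : ∑ j ∈ A, x j * (1 - x j) * (∏ k ∈ A.erase j, (1 - x k)) ^ 2
        ≤ ∑ j ∈ A, x j * P := by
      apply Finset.sum_le_sum
      intro j hj
      have hQnn : 0 ≤ ∏ k ∈ A.erase j, (1 - x k) :=
        Finset.prod_nonneg fun k _ => by linarith [(hx k).2]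
      have hQle : ∏ k ∈ A.erase j, (1 - x k) ≤ 1 :=
        Finset.prod_le_one (fun k _ => by linarith [(hx k).2])
          (fun k _ => by linarith [(hx k).1])
      have hPQ : (1 - x j) * ∏ k ∈ A.erase j, (1 - x k) = P :=
        Finset.mul_prod_erase A (fun k => 1 - x k) hj
      have hxj := hx j
      calc x j * (1 - x j) * (∏ k ∈ A.erase j, (1 - x k)) ^ 2
          = (x j * P) * ∏ k ∈ A.erase j, (1 - x k) := by rw [← hPQ]; ring
        _ ≤ (x j * P) * 1 :=
            mul_le_mul_of_nonneg_left hQle (mul_nonneg hxj.1.le hPnn)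
        _ = x j * P := mul_one _
    have step2 : P ≤ Real.exp (-S) := by
      have : P ≤ ∏ k ∈ A, Real.exp (-(x k)) := by
        apply Finset.prod_le_prod
        · intro k _; linarith [(hx k).2]
        · intro k _
          have := Real.add_one_le_exp (-(x k)); linarith
      calc P ≤ ∏ k ∈ A, Real.exp (-(x k)) := this
        _ = Real.exp (∑ k ∈ A, -(x k)) := (Real.exp_sum A _).symm
        _ = Real.exp (-S) := by rw [hS, Finset.sum_neg_distrib]
    have step3 : S * Real.exp (-S) ≤ 1 / Real.exp 1 := by
      have h1 : S ≤ Real.exp (S - 1) := by linarith [Real.add_one_le_exp (S - 1)]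
      have h2 : S * Real.exp (-S) ≤ Real.exp (S - 1) * Real.exp (-S) :=
        mul_le_mul_of_nonneg_right h1 (Real.exp_nonneg _)
      have h3 : Real.exp (S - 1) * Real.exp (-S) = Real.exp (-1) := by
        rw [← Real.exp_add]; ring_nf
      rw [h3] at h2
      have h4 : Real.exp (-1) = 1 / Real.exp 1 := by
        rw [Real.exp_neg, one_div]
      linarith
    calc ∑ j ∈ A, x j * (1 - x j) * (∏ k ∈ A.erase j, (1 - x k)) ^ 2
        ≤ ∑ j ∈ A, x j * P := step1
      _ = S * P := by rw [hS, Finset.sum_mul]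
      _ ≤ S * Real.exp (-S) := mul_le_mul_of_nonneg_left step2 hSnn
      _ ≤ 1 / Real.exp 1 := step3
end
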